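/- (Penalization limit for the obstacle problem.) Let φ : ℝ^k → ℝ be continuous and let f̄ : ℝ^k × ℝ × ℝ^d → ℝ be continuous and Lipschitz in (y,z) uniformly in x. Suppose that for each n ≥ 1, v̄^n : ℝ^k → ℝ is a continuous viscosity solution of the penalized equation r v(x) − ⟨b(x), D_x v(x)⟩ − ½Tr[(σσᵀ)(x) D²_x v(x)] − f̄(x, v(x), σ(x)ᵀ D_x v(x)) − n (v(x) − φ(x))⁻ = 0, that v̄^n ≤ v̄^{n+1}, and that v̄^n converges uniformly on compact subsets of ℝ^k to a continuous function v̄ satisfying v̄ ≥ φ pointwise. Then v̄ is a viscosity solution (both subsolution and supersolution) of the obstacle problem min{ v̄(x) − φ(x), r v̄(x) − ⟨b(x), D_x v̄(x)⟩ − ½Tr[(σσᵀ)(x) D²_x v̄(x)] − f̄(x, v̄(x), σ(x)ᵀ D_x v̄(x)) } = 0. -/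

import Mathlib

open Filter Matrix

noncomputable section

abbrev Vec (n : ℕ) := Fin n → ℝ

/-- Euclidean norm on `Fin n → ℝ`. -/
def eucNorm {n : ℕ} (v : Vec n) : ℝ := Real.sqrt (∑ i, v i ^ 2)

/-- Euclidean inner product. -/
def dotp {n : ℕ} (u v : Vec n) : ℝ := ∑ i, u i * v i

/-- Quadratic form `⟨X v, v⟩`. -/
def quadForm {n : ℕ} (X : Matrix (Fin n) (Fin n) ℝ) (v : Vec n) : ℝ :=
  ∑ i, ∑ j, X i j * v i * v j

/-- Squared Frobenius norm. -/
def frobSq {n p : ℕ} (A : Matrix (Fin n) (Fin p) ℝ) : ℝ := ∑ i, ∑ j, A i j ^ 2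

/-- `(q, X)` belongs to the second-order subjet `J^{2,-} φ (x)`. -/
def InSubjet {n : ℕ} (φ : Vec n → ℝ) (x q : Vec n) (X : Matrix (Fin n) (Fin n) ℝ) : Prop :=
  X.IsSymm ∧ ∀ ε > (0:ℝ), ∀ᶠ y in nhds x,
    φ x + dotp q (y - x) + (1/2) * quadForm X (y - x) - ε * eucNorm (y - x) ^ 2 ≤ φ y

/-- `(q, X)` belongs to the second-order superjet `J^{2,+} φ (x)`. -/
def InSuperjet {n : ℕ} (φ : Vec n → ℝ) (x q : Vec n) (X : Matrix (Fin n) (Fin n) ℝ) : Prop :=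
  X.IsSymm ∧ ∀ ε > (0:ℝ), ∀ᶠ y in nhds x,
    φ y ≤ φ x + dotp q (y - x) + (1/2) * quadForm X (y - x) + ε * eucNorm (y - x) ^ 2

/-- Polynomial growth. -/
def PolyGrowth {n : ℕ} (φ : Vec n → ℝ) : Prop :=
  ∃ (C : ℝ) (γ : ℕ), ∀ x, |φ x| ≤ C * (1 + eucNorm x ^ γ)

/-- The switching obstacle `max_{j ≠ i} (v^j(x) - g_{ij}(x))`. -/
def obstacle {k m : ℕ} (g : Fin m → Fin m → Vec k → ℝ) (v : Fin m → Vec k → ℝ)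
    (i : Fin m) (x : Vec k) : ℝ :=
  ⨆ j : {j : Fin m // j ≠ i}, (v j x - g i j x)

/-- The second order term of the system, evaluated on a jet `(q, X)`. -/
def ham {k d m : ℕ} (r : ℝ) (b : Vec k → Vec k) (σ : Vec k → Matrix (Fin k) (Fin d) ℝ)
    (f : Fin m → Vec k → (Fin m → ℝ) → Vec d → ℝ) (v : Fin m → Vec k → ℝ)
    (i : Fin m) (x q : Vec k) (X : Matrix (Fin k) (Fin k) ℝ) : ℝ :=
  r * v i x - dotp (b x) q - (1/2) * Matrix.trace (σ x * (σ x)ᵀ * X)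
    - f i x (fun j => v j x) ((σ x)ᵀ.mulVec q)

def IsSupersolution {k d m : ℕ} (r : ℝ) (b : Vec k → Vec k)
    (σ : Vec k → Matrix (Fin k) (Fin d) ℝ)
    (f : Fin m → Vec k → (Fin m → ℝ) → Vec d → ℝ)
    (g : Fin m → Fin m → Vec k → ℝ) (v : Fin m → Vec k → ℝ) : Prop :=
  ∀ (i : Fin m) (x q : Vec k) (X : Matrix (Fin k) (Fin k) ℝ), InSubjet (v i) x q X →
    0 ≤ min (v i x - obstacle g v i x) (ham r b σ f v i x q X)

def IsSubsolution {k d m : ℕ} (r : ℝ) (b : Vec k → Vec k)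
    (σ : Vec k → Matrix (Fin k) (Fin d) ℝ)
    (f : Fin m → Vec k → (Fin m → ℝ) → Vec d → ℝ)
    (g : Fin m → Fin m → Vec k → ℝ) (v : Fin m → Vec k → ℝ) : Prop :=
  ∀ (i : Fin m) (x q : Vec k) (X : Matrix (Fin k) (Fin k) ℝ), InSuperjet (v i) x q X →
    min (v i x - obstacle g v i x) (ham r b σ f v i x q X) ≤ 0

/-- Gradient with respect to the standard basis. -/
def grad {k : ℕ} (φ : Vec k → ℝ) (x : Vec k) : Vec k :=
  fun i => fderiv ℝ φ x (Pi.single i 1)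

/-- Hessian matrix with respect to the standard basis. -/
def hess {k : ℕ} (φ : Vec k → ℝ) (x : Vec k) : Matrix (Fin k) (Fin k) ℝ :=
  fun i j => fderiv ℝ (fun y => fderiv ℝ φ y (Pi.single j 1)) x (Pi.single i 1)

/-- The infinitesimal generator `𝓛φ = ½ Tr[σσᵀ D²φ] + b · Dφ`. -/
def genL {k d : ℕ} (b : Vec k → Vec k) (σ : Vec k → Matrix (Fin k) (Fin d) ℝ)
    (φ : Vec k → ℝ) (x : Vec k) : ℝ :=
  (1/2) * Matrix.trace (σ x * (σ x)ᵀ * hess φ x) + dotp (b x) (grad φ x)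

/-- The structural assumptions on the data `b, σ, f, g` that do not involve second
derivatives of the switching costs: Lipschitz continuity and linear growth of the
coefficients, continuity, uniform Lipschitz continuity in `(y,z)` with constant `C`,
polynomial growth and monotonicity of the generators, and nonnegativity, continuity
and polynomial growth of the switching costs. -/
def CoreAssumptions {k d m : ℕ} (b : Vec k → Vec k)
    (σ : Vec k → Matrix (Fin k) (Fin d) ℝ)
    (f : Fin m → Vec k → (Fin m → ℝ) → Vec d → ℝ)
    (g : Fin m → Fin m → Vec k → ℝ) (C : ℝ) : Prop :=
  (∃ Cb : ℝ, ∀ x y : Vec k, eucNorm (b x - b y) ≤ Cb * eucNorm (x - y) ∧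
      Real.sqrt (frobSq (σ x - σ y)) ≤ Cb * eucNorm (x - y)) ∧
  (∃ Cb : ℝ, ∀ x : Vec k, eucNorm (b x) ≤ Cb * (1 + eucNorm x) ∧
      Real.sqrt (frobSq (σ x)) ≤ Cb * (1 + eucNorm x)) ∧
  (∀ i, Continuous fun p : Vec k × (Fin m → ℝ) × Vec d => f i p.1 p.2.1 p.2.2) ∧
  (∀ i (x : Vec k) (y y' : Fin m → ℝ) (z z' : Vec d),
      |f i x y z - f i x y' z'| ≤ C * (eucNorm (y - y') + eucNorm (z - z'))) ∧
  (∀ i, PolyGrowth fun x => f i x 0 0) ∧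
  (∀ i j, j ≠ i → ∀ (x : Vec k) (z : Vec d) (y : Fin m → ℝ) (t t' : ℝ), t ≤ t' →
      f i x (Function.update y j t) z ≤ f i x (Function.update y j t') z) ∧
  (∀ i j x, 0 ≤ g i j x) ∧
  (∀ i x, g i i x = 0) ∧
  (∀ i j, Continuous (g i j)) ∧
  (∀ i j, PolyGrowth (g i j))

/-- The non-free-loop condition on the switching costs. -/
def NonFreeLoop {k m : ℕ} (g : Fin m → Fin m → Vec k → ℝ) : Prop :=
  ∀ (N : ℕ) (ι : ℕ → Fin m), 2 ≤ N → ι 0 ≠ ι 1 → ι 0 = ι (N - 1) →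
    (Finset.image ι (Finset.range N)).card = N - 1 →
    ∀ x : Vec k, 0 < ∑ l ∈ Finset.range (N - 1), g (ι l) (ι (l + 1)) x

/-- The full standing assumptions: the core assumptions, smoothness of the switching
costs with `𝓛 g_{ij} ≤ 0`, and the non-free-loop condition. -/
def DataAssumptions {k d m : ℕ} (b : Vec k → Vec k)
    (σ : Vec k → Matrix (Fin k) (Fin d) ℝ)
    (f : Fin m → Vec k → (Fin m → ℝ) → Vec d → ℝ)
    (g : Fin m → Fin m → Vec k → ℝ) (C : ℝ) : Prop :=
  CoreAssumptions b σ f g C ∧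
  (∀ i j, ContDiff ℝ 2 (g i j)) ∧
  (∀ i j x, genL b σ (g i j) x ≤ 0) ∧
  NonFreeLoop g

/-! Stability of viscosity solutions under locally uniform limits. If `(q, X)` is a superjet
of `v̄` at `x` and `ψ` is the quadratic polynomial of the jet `(q, X + ε I)`, then `v̄ - ψ` has a
strict maximum at `x`, so maximum points `xₙ` of `vⁿ - ψ` near `x` converge to `x` and carry the
superjets `(q + (X + ε I)(xₙ - x), X + ε I)` of `vⁿ`. Passing to the limit in the equation for
`vⁿ` and letting `ε → 0` gives the inequality for `v̄`. Where `v̄ > φ` the penalization vanishes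
near `x` for large `n`, and in the supersolution inequality it has the favourable sign;
supersolutions are handled through `u ↦ -u`. -/
open Topology

section Euclidean

variable {n : ℕ}

lemma eucNorm_sq (v : Vec n) : eucNorm v ^ 2 = v ⬝ᵥ v := by
  rw [eucNorm, Real.sq_sqrt (Finset.sum_nonneg fun i _ => sq_nonneg _)]
  simp only [dotProduct, sq]

lemma abs_apply_le_eucNorm (v : Vec n) (i : Fin n) : |v i| ≤ eucNorm v := by
  rw [← Real.sqrt_sq_eq_abs]
  exact Real.sqrt_le_sqrt
    (Finset.single_le_sum (f := fun i => v i ^ 2) (fun i _ => sq_nonneg _) (Finset.mem_univ i))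

lemma norm_le_eucNorm (v : Vec n) : ‖v‖ ≤ eucNorm v :=
  (pi_norm_le_iff_of_nonneg (Real.sqrt_nonneg _)).2 fun i => abs_apply_le_eucNorm v i

lemma continuous_eucNorm : Continuous (eucNorm (n := n)) := by
  unfold eucNorm
  fun_prop

lemma abs_apply_le_sqrt_frobSq {p : ℕ} (A : Matrix (Fin n) (Fin p) ℝ) (i : Fin n) (j : Fin p) :
    |A i j| ≤ √(frobSq A) := by
  rw [← Real.sqrt_sq_eq_abs]
  refine Real.sqrt_le_sqrt ?_
  calc A i j ^ 2 ≤ ∑ j', A i j' ^ 2 :=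
        Finset.single_le_sum (f := fun j' => A i j' ^ 2) (fun _ _ => sq_nonneg _)
          (Finset.mem_univ j)
    _ ≤ frobSq A :=
        Finset.single_le_sum (f := fun i' => ∑ j', A i' j' ^ 2)
          (fun _ _ => Finset.sum_nonneg fun _ _ => sq_nonneg _) (Finset.mem_univ i)

lemma continuous_of_abs_sub_le_mul_eucNorm {f : Vec n → ℝ} {C : ℝ}
    (h : ∀ x y, |f x - f y| ≤ C * eucNorm (x - y)) : Continuous f := by
  refine continuous_iff_continuousAt.2 fun x => tendsto_iff_dist_tendsto_zero.2 ?_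
  refine squeeze_zero (fun _ => dist_nonneg) (fun y => h y x) ?_
  have : Continuous fun y => C * eucNorm (y - x) := by
    have := continuous_eucNorm (n := n); fun_prop
  simpa [eucNorm] using this.tendsto x

lemma continuous_of_eucNorm_sub_le {m : ℕ} {f : Vec n → Vec m} {C : ℝ}
    (h : ∀ x y, eucNorm (f x - f y) ≤ C * eucNorm (x - y)) : Continuous f :=
  continuous_pi fun i => continuous_of_abs_sub_le_mul_eucNorm fun x y =>
    (abs_apply_le_eucNorm _ i).trans (h x y)

lemma continuous_of_sqrt_frobSq_sub_le {p : ℕ} {f : Vec n → Matrix (Fin n) (Fin p) ℝ} {C : ℝ}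
    (h : ∀ x y, √(frobSq (f x - f y)) ≤ C * eucNorm (x - y)) : Continuous f :=
  continuous_matrix fun i j => continuous_of_abs_sub_le_mul_eucNorm fun x y =>
    (abs_apply_le_sqrt_frobSq _ i j).trans (h x y)

end Euclidean

section Jets

variable {n : ℕ}

def jetPoly (x p : Vec n) (Y : Matrix (Fin n) (Fin n) ℝ) (y : Vec n) : ℝ :=
  dotp p (y - x) + (1/2) * quadForm Y (y - x)

lemma dotp_eq_dotProduct (u v : Vec n) : dotp u v = u ⬝ᵥ v := rfl

lemma quadForm_eq_dotProduct (Y : Matrix (Fin n) (Fin n) ℝ) (v : Vec n) :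
    quadForm Y v = v ⬝ᵥ Y *ᵥ v := by
  simp only [quadForm, dotProduct, mulVec, Finset.mul_sum]
  exact Finset.sum_congr rfl fun i _ => Finset.sum_congr rfl fun j _ => by ring

lemma continuous_jetPoly (x p : Vec n) (Y : Matrix (Fin n) (Fin n) ℝ) :
    Continuous (jetPoly x p Y) := by
  unfold jetPoly
  simp only [dotp_eq_dotProduct, quadForm_eq_dotProduct]
  fun_prop

lemma jetPoly_self (x p : Vec n) (Y : Matrix (Fin n) (Fin n) ℝ) : jetPoly x p Y x = 0 := by
  simp [jetPoly, dotp, quadForm]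

lemma jetPoly_add_smul_one (x p : Vec n) (Y : Matrix (Fin n) (Fin n) ℝ) (c : ℝ) (y : Vec n) :
    jetPoly x p (Y + c • 1) y = jetPoly x p Y y + c / 2 * eucNorm (y - x) ^ 2 := by
  simp only [jetPoly, quadForm_eq_dotProduct, eucNorm_sq, add_mulVec, smul_mulVec, one_mulVec,
    dotProduct_add, dotProduct_smul, smul_eq_mul]
  ring

lemma jetPoly_sub_jetPoly {Y : Matrix (Fin n) (Fin n) ℝ} (hY : Y.IsSymm) (x p y z : Vec n) :
    jetPoly x p Y y - jetPoly x p Y z = jetPoly z (p + Y *ᵥ (z - x)) Y y := by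
  have hyx : y - x = (y - z) + (z - x) := by abel
  have hsymm : (z - x) ⬝ᵥ Y *ᵥ (y - z) = Y *ᵥ (z - x) ⬝ᵥ (y - z) := by
    rw [dotProduct_mulVec, ← mulVec_transpose, hY.eq, dotProduct_comm]
  simp only [jetPoly, dotp_eq_dotProduct, quadForm_eq_dotProduct, hyx, mulVec_add, dotProduct_add,
    add_dotProduct, hsymm, dotProduct_comm (y - z)]
  ring

lemma inSuperjet_of_isLocalMax_sub_jetPoly {u : Vec n → ℝ} {x p z : Vec n}
    {Y : Matrix (Fin n) (Fin n) ℝ} (hY : Y.IsSymm)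
    (hmax : IsLocalMax (fun y => u y - jetPoly x p Y y) z) :
    InSuperjet u z (p + Y *ᵥ (z - x)) Y := by
  refine ⟨hY, fun ε hε => ?_⟩
  filter_upwards [hmax] with y hy
  have hsub := jetPoly_sub_jetPoly hY x p y z
  have hε' : 0 ≤ ε * eucNorm (y - z) ^ 2 := by positivity
  simp only [jetPoly] at hsub hy
  linarith

lemma inSubjet_iff_inSuperjet_neg (u : Vec n → ℝ) (x q : Vec n) (X : Matrix (Fin n) (Fin n) ℝ) :
    InSubjet u x q X ↔ InSuperjet (-u) x (-q) (-X) := by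
  have hneg : ∀ v, dotp (-q) v + (1/2) * quadForm (-X) v = -(dotp q v + (1/2) * quadForm X v) :=
    fun v => by simp only [dotp_eq_dotProduct, quadForm_eq_dotProduct, neg_mulVec, neg_dotProduct,
      dotProduct_neg]; ring
  refine and_congr (by rw [Matrix.IsSymm, Matrix.IsSymm, transpose_neg, neg_inj])
    (forall₂_congr fun ε _ => Filter.eventually_congr (Eventually.of_forall fun y => ?_))
  simp only [Pi.neg_apply, add_assoc, hneg]
  constructor <;> intro h <;> linarith

end Jets

lemma tendsto_of_isMaxOn_of_tendstoUniformlyOn {α ι : Type*} [PseudoMetricSpace α]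
    {l : Filter ι} {G : ι → α → ℝ} {g : α → ℝ} {B : Set α} {x : α} {z : ι → α} {c : ℝ}
    (hc : 0 < c) (hx : x ∈ B) (hgap : ∀ y ∈ B, g y + c * dist y x ^ 2 ≤ g x)
    (hG : TendstoUniformlyOn G g l B) (hzB : ∀ i, z i ∈ B) (hz : ∀ i, IsMaxOn (G i) B (z i)) :
    Tendsto z l (𝓝 x) := by
  refine Metric.tendsto_nhds.2 fun η hη => ?_
  filter_upwards [Metric.tendstoUniformlyOn_iff.1 hG (c * η ^ 2 / 4) (by positivity)] with i hi
  have hGx := hi x hx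
  have hGz := hi (z i) (hzB i)
  rw [Real.dist_eq, abs_lt] at hGx hGz
  have hgz := hgap (z i) (hzB i)
  have hmax : G i x ≤ G i (z i) := hz i hx
  have hsq : dist (z i) x ^ 2 < η ^ 2 := by nlinarith
  exact lt_of_pow_lt_pow_left₀ 2 hη.le hsq

section Stability

variable {k : ℕ}

lemma exists_tendsto_inSuperjet_of_tendstoLocallyUniformly {ι : Type*} {l : Filter ι}
    {vn : ι → Vec k → ℝ} {vb : Vec k → ℝ} (hvn : ∀ i, Continuous (vn i)) (hvb : Continuous vb)
    (hconv : TendstoLocallyUniformly vn vb l) {x q : Vec k} {X : Matrix (Fin k) (Fin k) ℝ}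
    (hjet : InSuperjet vb x q X) {ε : ℝ} (hε : 0 < ε) :
    ∃ z : ι → Vec k, Tendsto z l (𝓝 x) ∧ Tendsto (fun i => vn i (z i)) l (𝓝 (vb x)) ∧
      ∀ᶠ i in l, InSuperjet (vn i) (z i) (q + (X + ε • 1) *ᵥ (z i - x)) (X + ε • 1) := by
  obtain ⟨hX, hvb_le⟩ := hjet
  have hY : (X + ε • 1).IsSymm := hX.add (isSymm_one.smul ε)
  set ψ := jetPoly x q (X + ε • 1)
  obtain ⟨δ, hδ, hball⟩ := Metric.eventually_nhds_iff.1 (hvb_le (ε / 4) (by positivity))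
  set B := Metric.closedBall x (δ / 2)
  have hB : IsCompact B := isCompact_closedBall x (δ / 2)
  have hxB : x ∈ B := Metric.mem_closedBall_self (by positivity)
  have hgap : ∀ y ∈ B, (vb y - ψ y) + ε / 4 * dist y x ^ 2 ≤ vb x - ψ x := by
    intro y hy
    have hyx : dist y x < δ := (Metric.mem_closedBall.1 hy).trans_lt (half_lt_self hδ)
    have hdist : ε / 4 * dist y x ^ 2 ≤ ε / 4 * eucNorm (y - x) ^ 2 := by
      rw [dist_eq_norm]
      gcongr
      exact norm_le_eucNorm _
    have hvby := hball hyx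
    simp only [ψ, jetPoly_self, jetPoly_add_smul_one]
    unfold jetPoly
    linarith
  choose z hzB hzmax using fun i =>
    hB.exists_isMaxOn ⟨x, hxB⟩ ((hvn i).sub (continuous_jetPoly _ _ _)).continuousOn
  have hz : Tendsto z l (𝓝 x) :=
    tendsto_of_isMaxOn_of_tendstoUniformlyOn (by positivity) hxB hgap
      ((tendstoLocallyUniformly_iff_forall_isCompact.1 hconv B hB).sub
        fun _ hu => Eventually.of_forall fun _ _ _ => refl_mem_uniformity hu)
      hzB hzmax
  refine ⟨z, hz, hconv.tendsto_comp hvb.continuousAt hz, ?_⟩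
  filter_upwards [hz.eventually (Metric.ball_mem_nhds x (half_pos hδ))] with i hi
  exact inSuperjet_of_isLocalMax_sub_jetPoly hY ((hzmax i).isLocalMax
    (Filter.mem_of_superset (Metric.isOpen_ball.mem_nhds hi) Metric.ball_subset_closedBall))

abbrev SecondOrderOp (k : ℕ) : Type := Vec k → ℝ → Vec k → Matrix (Fin k) (Fin k) ℝ → ℝ

def SubsolutionAt (F : SecondOrderOp k) (u : Vec k → ℝ) (x : Vec k) : Prop :=
  ∀ q X, InSuperjet u x q X → F x (u x) q X ≤ 0

def SupersolutionAt (F : SecondOrderOp k) (u : Vec k → ℝ) (x : Vec k) : Prop :=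
  ∀ q X, InSubjet u x q X → 0 ≤ F x (u x) q X

def negOp (F : SecondOrderOp k) : SecondOrderOp k :=
  fun x u q X => -F x (-u) (-q) (-X)

lemma supersolutionAt_iff_subsolutionAt_negOp {F : SecondOrderOp k} {u : Vec k → ℝ} {x : Vec k} :
    SupersolutionAt F u x ↔ SubsolutionAt (negOp F) (-u) x := by
  refine ⟨fun h q X hjet => ?_, fun h q X hjet => ?_⟩
  · rw [← neg_neg q, ← neg_neg X, ← inSubjet_iff_inSuperjet_neg] at hjet
    simpa [negOp] using h _ _ hjet
  · simpa [negOp] using h _ _ ((inSubjet_iff_inSuperjet_neg u x q X).1 hjet)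

lemma continuous_negOp {F : SecondOrderOp k} (hF : Continuous ↿F) : Continuous ↿(negOp F) :=
  (hF.comp (continuous_fst.prodMk (continuous_snd.neg))).neg

theorem subsolutionAt_of_tendstoLocallyUniformly {ι : Type*} {l : Filter ι} [l.NeBot]
    {F : SecondOrderOp k} (hF : Continuous ↿F)
    {vn : ι → Vec k → ℝ} {vb : Vec k → ℝ} (hvn : ∀ i, Continuous (vn i)) (hvb : Continuous vb)
    (hconv : TendstoLocallyUniformly vn vb l) {x : Vec k}
    (hsub : ∀ᶠ p in l ×ˢ 𝓝 x, SubsolutionAt F (vn p.1) p.2) : SubsolutionAt F vb x := by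
  intro q X hjet
  have hpert : ∀ ε : ℝ, 0 < ε → F x (vb x) q (X + ε • 1) ≤ 0 := by
    intro ε hε
    obtain ⟨z, hz, hvz, hjz⟩ :=
      exists_tendsto_inSuperjet_of_tendstoLocallyUniformly hvn hvb hconv hjet hε
    have hq : Tendsto (fun i => q + (X + ε • 1) *ᵥ (z i - x)) l (𝓝 q) := by
      have : Continuous fun y => q + (X + ε • 1) *ᵥ (y - x) := by fun_prop
      simpa [Function.comp_def] using (this.tendsto x).comp hz
    refine le_of_tendsto ((hF.tendsto _).comp
      (hz.prodMk_nhds (hvz.prodMk_nhds (hq.prodMk_nhds tendsto_const_nhds)))) ?_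
    filter_upwards [hjz, (tendsto_id.prodMk hz).eventually hsub] with i hjet' hsub'
    exact hsub' _ _ hjet'
  have hlim : Tendsto (fun ε : ℝ => F x (vb x) q (X + ε • 1)) (𝓝[>] 0) (𝓝 (F x (vb x) q X)) := by
    have : Continuous fun ε : ℝ => F x (vb x) q (X + ε • 1) :=
      hF.comp (by fun_prop : Continuous fun ε : ℝ => (x, vb x, q, X + ε • (1 : Matrix _ _ ℝ)))
    simpa using (this.tendsto 0).mono_left nhdsWithin_le_nhds
  exact le_of_tendsto hlim (eventually_nhdsWithin_of_forall fun ε hε => hpert ε hε)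

theorem supersolutionAt_of_tendstoLocallyUniformly {ι : Type*} {l : Filter ι} [l.NeBot]
    {F : SecondOrderOp k} (hF : Continuous ↿F)
    {vn : ι → Vec k → ℝ} {vb : Vec k → ℝ} (hvn : ∀ i, Continuous (vn i)) (hvb : Continuous vb)
    (hconv : TendstoLocallyUniformly vn vb l) {x : Vec k}
    (hsup : ∀ᶠ p in l ×ˢ 𝓝 x, SupersolutionAt F (vn p.1) p.2) : SupersolutionAt F vb x :=
  supersolutionAt_iff_subsolutionAt_negOp.2 <|
    subsolutionAt_of_tendstoLocallyUniformly (continuous_negOp hF) (fun i => (hvn i).neg) hvb.neg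
      hconv.neg (hsup.mono fun _ h => supersolutionAt_iff_subsolutionAt_negOp.1 h)

end Stability

lemma TendstoLocallyUniformly.tendsto_prod_nhds {α β ι : Type*} [TopologicalSpace α]
    [UniformSpace β] {l : Filter ι} {F : ι → α → β} {f : α → β} {x : α}
    (h : TendstoLocallyUniformly F f l) (hf : ContinuousAt f x) :
    Tendsto (fun p : ι × α => F p.1 p.2) (l ×ˢ 𝓝 x) (𝓝 (f x)) :=
  tendsto_comp_of_locally_uniform_limit hf tendsto_snd fun u hu =>
    let ⟨t, ht, hF⟩ := h u hu x
    ⟨t, ht, hF.prod_inl _⟩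

def hjbOp {k d : ℕ} (r : ℝ) (b : Vec k → Vec k) (σ : Vec k → Matrix (Fin k) (Fin d) ℝ)
    (fb : Vec k → ℝ → Vec d → ℝ) : SecondOrderOp k :=
  fun x u q X => r * u - dotp (b x) q - (1/2) * Matrix.trace (σ x * (σ x)ᵀ * X)
    - fb x u ((σ x)ᵀ.mulVec q)

lemma continuous_hjbOp {k d : ℕ} (r : ℝ) {b : Vec k → Vec k}
    {σ : Vec k → Matrix (Fin k) (Fin d) ℝ} {fb : Vec k → ℝ → Vec d → ℝ} (hb : Continuous b)
    (hσ : Continuous σ) (hfb : Continuous fun p : Vec k × ℝ × Vec d => fb p.1 p.2.1 p.2.2) :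
    Continuous ↿(hjbOp r b σ fb) := by
  have hfb' : Continuous fun p : Vec k × ℝ × Vec k × Matrix (Fin k) (Fin k) ℝ =>
      fb p.1 p.2.1 ((σ p.1)ᵀ.mulVec p.2.2.1) :=
    hfb.comp (by fun_prop : Continuous fun p : Vec k × ℝ × Vec k × Matrix (Fin k) (Fin k) ℝ =>
      (p.1, p.2.1, (σ p.1)ᵀ.mulVec p.2.2.1))
  unfold hjbOp
  simp only [dotp_eq_dotProduct]
  fun_prop

theorem statement11_general {k d : ℕ} (r : ℝ)
    (b : Vec k → Vec k) (σ : Vec k → Matrix (Fin k) (Fin d) ℝ)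
    (hb : ∃ Cb : ℝ, ∀ x y : Vec k, eucNorm (b x - b y) ≤ Cb * eucNorm (x - y) ∧
      Real.sqrt (frobSq (σ x - σ y)) ≤ Cb * eucNorm (x - y))
    (φ : Vec k → ℝ) (hφ : Continuous φ)
    (fb : Vec k → ℝ → Vec d → ℝ)
    (hfc : Continuous fun p : Vec k × ℝ × Vec d => fb p.1 p.2.1 p.2.2)
    (vn : ℕ → Vec k → ℝ) (hvnc : ∀ n, Continuous (vn n))
    (hsoln : ∀ n : ℕ, 1 ≤ n →
      (∀ (x q : Vec k) (X : Matrix (Fin k) (Fin k) ℝ), InSuperjet (vn n) x q X →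
        r * vn n x - dotp (b x) q - (1/2) * Matrix.trace (σ x * (σ x)ᵀ * X)
          - fb x (vn n x) ((σ x)ᵀ.mulVec q) - (n : ℝ) * max (φ x - vn n x) 0 ≤ 0) ∧
      (∀ (x q : Vec k) (X : Matrix (Fin k) (Fin k) ℝ), InSubjet (vn n) x q X →
        0 ≤ r * vn n x - dotp (b x) q - (1/2) * Matrix.trace (σ x * (σ x)ᵀ * X)
          - fb x (vn n x) ((σ x)ᵀ.mulVec q) - (n : ℝ) * max (φ x - vn n x) 0))
    (vbar : Vec k → ℝ) (hvbarc : Continuous vbar)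
    (hconv : ∀ K : Set (Vec k), IsCompact K →
      TendstoUniformlyOn (fun n => vn n) vbar atTop K)
    (hge : ∀ x, φ x ≤ vbar x) :
    (∀ (x q : Vec k) (X : Matrix (Fin k) (Fin k) ℝ), InSuperjet vbar x q X →
      min (vbar x - φ x)
        (r * vbar x - dotp (b x) q - (1/2) * Matrix.trace (σ x * (σ x)ᵀ * X)
          - fb x (vbar x) ((σ x)ᵀ.mulVec q)) ≤ 0) ∧
    (∀ (x q : Vec k) (X : Matrix (Fin k) (Fin k) ℝ), InSubjet vbar x q X →
      0 ≤ min (vbar x - φ x)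
        (r * vbar x - dotp (b x) q - (1/2) * Matrix.trace (σ x * (σ x)ᵀ * X)
          - fb x (vbar x) ((σ x)ᵀ.mulVec q))) := by
  obtain ⟨Cb, hCb⟩ := hb
  have hH := continuous_hjbOp r (continuous_of_eucNorm_sub_le fun x y => (hCb x y).1)
    (continuous_of_sqrt_frobSq_sub_le fun x y => (hCb x y).2) hfc
  have hlu : TendstoLocallyUniformly vn vbar atTop :=
    tendstoLocallyUniformly_iff_forall_isCompact.2 hconv
  refine ⟨fun x q X hjet => ?_, fun x q X hjet => le_min (sub_nonneg.2 (hge x)) ?_⟩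
  · rcases le_or_gt (vbar x) (φ x) with hle | hlt
    · exact min_le_of_left_le (sub_nonpos.2 hle)
    -- Above the obstacle, the penalization vanishes near `x` for large `n`.
    have hφv : ∀ᶠ p in atTop ×ˢ 𝓝 x, φ p.2 < vn p.1 p.2 :=
      (((hlu.tendsto_prod_nhds hvbarc.continuousAt).sub
        ((hφ.tendsto x).comp tendsto_snd)).eventually (lt_mem_nhds (sub_pos.2 hlt))).mono
        fun _ => sub_pos.1
    refine min_le_of_right_le
      (subsolutionAt_of_tendstoLocallyUniformly hH hvnc hvbarc hlu ?_ q X hjet)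
    filter_upwards [hφv, (eventually_ge_atTop 1).prod_inl _] with p hp hn y Y hjet'
    have hsol := (hsoln p.1 hn).1 p.2 y Y hjet'
    rwa [max_eq_right (by linarith), mul_zero, sub_zero] at hsol
  · refine supersolutionAt_of_tendstoLocallyUniformly hH hvnc hvbarc hlu ?_ q X hjet
    filter_upwards [(eventually_ge_atTop 1).prod_inl _] with p hn y Y hjet'
    have hpen : 0 ≤ (p.1 : ℝ) * max (φ p.2 - vn p.1 p.2) 0 := by positivity
    have hsol := (hsoln p.1 hn).2 p.2 y Y hjet'
    unfold hjbOp
    linarith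

/-- **Penalization limit for the obstacle problem.** If the continuous
viscosity solutions `v̄ⁿ` of the penalized equations
`r v - ⟨b, Dv⟩ - ½Tr[σσᵀ D²v] - f̄(x, v, σᵀ Dv) - n (v - φ)⁻ = 0` increase in `n` and
converge uniformly on compacts to a continuous `v̄ ≥ φ`, then `v̄` is a viscosity
solution of the obstacle problem
`min{ v̄ - φ, r v̄ - ⟨b, Dv̄⟩ - ½Tr[σσᵀ D²v̄] - f̄(x, v̄, σᵀ Dv̄) } = 0`. -/
theorem statement11 {k d : ℕ} (hk : 1 ≤ k) (hd : 1 ≤ d) (r : ℝ) (hr : 0 < r)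
    (b : Vec k → Vec k) (σ : Vec k → Matrix (Fin k) (Fin d) ℝ)
    (hb : ∃ Cb : ℝ, ∀ x y : Vec k, eucNorm (b x - b y) ≤ Cb * eucNorm (x - y) ∧
      Real.sqrt (frobSq (σ x - σ y)) ≤ Cb * eucNorm (x - y))
    (hb' : ∃ Cb : ℝ, ∀ x : Vec k, eucNorm (b x) ≤ Cb * (1 + eucNorm x) ∧
      Real.sqrt (frobSq (σ x)) ≤ Cb * (1 + eucNorm x))
    (φ : Vec k → ℝ) (hφ : Continuous φ)
    (fb : Vec k → ℝ → Vec d → ℝ)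
    (hfc : Continuous fun p : Vec k × ℝ × Vec d => fb p.1 p.2.1 p.2.2)
    (Cf : ℝ) (hflip : ∀ (x : Vec k) (y y' : ℝ) (z z' : Vec d),
      |fb x y z - fb x y' z'| ≤ Cf * (|y - y'| + eucNorm (z - z')))
    (vn : ℕ → Vec k → ℝ) (hvnc : ∀ n, Continuous (vn n))
    (hsoln : ∀ n : ℕ, 1 ≤ n →
      (∀ (x q : Vec k) (X : Matrix (Fin k) (Fin k) ℝ), InSuperjet (vn n) x q X →
        r * vn n x - dotp (b x) q - (1/2) * Matrix.trace (σ x * (σ x)ᵀ * X)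
          - fb x (vn n x) ((σ x)ᵀ.mulVec q) - (n : ℝ) * max (φ x - vn n x) 0 ≤ 0) ∧
      (∀ (x q : Vec k) (X : Matrix (Fin k) (Fin k) ℝ), InSubjet (vn n) x q X →
        0 ≤ r * vn n x - dotp (b x) q - (1/2) * Matrix.trace (σ x * (σ x)ᵀ * X)
          - fb x (vn n x) ((σ x)ᵀ.mulVec q) - (n : ℝ) * max (φ x - vn n x) 0))
    (hmono : ∀ n x, vn n x ≤ vn (n + 1) x)
    (vbar : Vec k → ℝ) (hvbarc : Continuous vbar)
    (hconv : ∀ K : Set (Vec k), IsCompact K →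
      TendstoUniformlyOn (fun n => vn n) vbar atTop K)
    (hge : ∀ x, φ x ≤ vbar x) :
    (∀ (x q : Vec k) (X : Matrix (Fin k) (Fin k) ℝ), InSuperjet vbar x q X →
      min (vbar x - φ x)
        (r * vbar x - dotp (b x) q - (1/2) * Matrix.trace (σ x * (σ x)ᵀ * X)
          - fb x (vbar x) ((σ x)ᵀ.mulVec q)) ≤ 0) ∧
    (∀ (x q : Vec k) (X : Matrix (Fin k) (Fin k) ℝ), InSubjet vbar x q X →
      0 ≤ min (vbar x - φ x)
        (r * vbar x - dotp (b x) q - (1/2) * Matrix.trace (σ x * (σ x)ᵀ * X)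
          - fb x (vbar x) ((σ x)ᵀ.mulVec q))) :=
  statement11_general r b σ hb φ hφ fb hfc vn hvnc hsoln vbar hvbarc hconv hge
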